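/- arXiv:2206.02035 — 2 statements merged into one kernel-verified Lean document; each statement's English description precedes it below -/
import Mathlib

section
/- Let θ₁ > 0, β > 1, and let ξ(·,s) be nonnegative measurable on (0,∞) for each s. If Λ(μ,ν) ≥ θ₁(μ^β + ν^β) for all μ,ν > 0 and r ≥ 2, then ∫₀^∞ ∫₀^μ (r ν μ^{r−1} − ν^r) Λ(μ,ν) ξ(μ,s) ξ(ν,s) dν dμ ≥ (r−1) θ₁ ∫₀^∞ ∫₀^∞ μ ν^{β+r−1} ξ(μ,s) ξ(ν,s) dν dμ. -/
open MeasureTheory Set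
open scoped ENNReal

/-! Cutting the quadrant `{μ, ν > 0}` along the diagonal, which is null, and swapping the
variables on the upper triangle turns the left-hand double integral into one over `0 < ν < μ`
of the symmetrised integrand. On that triangle, `ν ≤ μ` and `r ≥ 2` give
`r ν μ^(r-1) - ν^r ≥ (r-1) ν μ^(r-1)` and `μ ν^(β+r-1) ≤ ν^(β+1) μ^(r-1)`, so
`(r-1) (μ ν^(β+r-1) + ν μ^(β+r-1)) ≤ (r ν μ^(r-1) - ν^r) (μ^β + ν^β)`, and the lower bound
on `Λ` finishes the comparison pointwise. -/

section Triangle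

variable {α : Type*} [LinearOrder α] [TopologicalSpace α] [OrderClosedTopology α]
  [SecondCountableTopology α] [MeasurableSpace α] [OpensMeasurableSpace α]
  {m : Measure α} [SFinite m] {f : α → α → ℝ≥0∞}

theorem measurable_setLIntegral_Iio (hf : Measurable (Function.uncurry f)) :
    Measurable fun x ↦ ∫⁻ y in Iio x, f x y ∂m := by
  simp_rw [← lintegral_indicator measurableSet_Iio]
  exact (hf.indicator (measurableSet_lt measurable_snd measurable_fst)).lintegral_prod_right'

theorem lintegral_setLIntegral_Ioi_swap (hf : Measurable (Function.uncurry f)) :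
    ∫⁻ x, ∫⁻ y in Ioi x, f x y ∂m ∂m = ∫⁻ y, ∫⁻ x in Iio y, f x y ∂m ∂m := by
  simp_rw [← lintegral_indicator measurableSet_Ioi, ← lintegral_indicator measurableSet_Iio]
  exact lintegral_lintegral_swap
    (hf.indicator (measurableSet_lt measurable_fst measurable_snd)).aemeasurable

theorem lintegral_lintegral_eq_lintegral_setLIntegral_Iio_add_swap [NullSingletonClass m]
    (hf : Measurable (Function.uncurry f)) :
    ∫⁻ x, ∫⁻ y, f x y ∂m ∂m = ∫⁻ x, ∫⁻ y in Iio x, (f x y + f y x) ∂m ∂m := by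
  have hsplit (x : α) :
      ∫⁻ y, f x y ∂m = (∫⁻ y in Iio x, f x y ∂m) + ∫⁻ y in Ioi x, f x y ∂m := by
    rw [← lintegral_union measurableSet_Ioi Iio_disjoint_Ioi_same, Iio_union_Ioi,
      restrict_compl_singleton]
  have hsum (x : α) : ∫⁻ y in Iio x, (f x y + f y x) ∂m
      = (∫⁻ y in Iio x, f x y ∂m) + ∫⁻ y in Iio x, f y x ∂m :=
    lintegral_add_left (hf.comp measurable_prodMk_left) _
  simp_rw [hsplit, hsum]
  rw [lintegral_add_left (measurable_setLIntegral_Iio hf), lintegral_setLIntegral_Ioi_swap hf,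
    lintegral_add_left (measurable_setLIntegral_Iio hf)]

end Triangle

section Weights

variable {μ ν r : ℝ}

theorem rpow_le_mul_rpow_sub_one (hν : 0 < ν) (hνμ : ν ≤ μ) (hr : 1 ≤ r) :
    ν ^ r ≤ ν * μ ^ (r - 1) := by
  calc ν ^ r = ν * ν ^ (r - 1) := by
        rw [← Real.rpow_one_add' hν.le (by linarith), add_sub_cancel]
    _ ≤ ν * μ ^ (r - 1) := by gcongr

theorem mul_rpow_add_le_mul_rpow (β : ℝ) (hν : 0 < ν) (hνμ : ν ≤ μ) (hr : 2 ≤ r) :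
    μ * ν ^ (β + r - 1) ≤ ν ^ (β + 1) * μ ^ (r - 1) := by
  have hμ : 0 < μ := hν.trans_le hνμ
  calc μ * ν ^ (β + r - 1) = ν ^ (β + 1) * (μ * ν ^ (r - 2)) := by
        rw [show β + r - 1 = (β + 1) + (r - 2) by ring, Real.rpow_add hν]; ring
    _ ≤ ν ^ (β + 1) * (μ * μ ^ (r - 2)) := by gcongr
    _ = ν ^ (β + 1) * μ ^ (r - 1) := by
        rw [← Real.rpow_one_add' hμ.le (by linarith)]; ring_nf

theorem sub_one_mul_symmetrized_weight_le (β : ℝ) (hν : 0 < ν) (hνμ : ν ≤ μ) (hr : 2 ≤ r) :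
    (r - 1) * (μ * ν ^ (β + r - 1) + ν * μ ^ (β + r - 1))
      ≤ (r * ν * μ ^ (r - 1) - ν ^ r) * (μ ^ β + ν ^ β) := by
  have hμ : 0 < μ := hν.trans_le hνμ
  have h₁ := rpow_le_mul_rpow_sub_one hν hνμ (by linarith : (1 : ℝ) ≤ r)
  have h₂ := mul_rpow_add_le_mul_rpow β hν hνμ hr
  have e₁ : ν * μ ^ (β + r - 1) = ν * μ ^ (r - 1) * μ ^ β := by
    rw [show β + r - 1 = (r - 1) + β by ring, Real.rpow_add hμ]; ring
  have e₂ : ν ^ (β + 1) * μ ^ (r - 1) = ν * μ ^ (r - 1) * ν ^ β := by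
    rw [Real.rpow_add hν, Real.rpow_one]; ring
  calc (r - 1) * (μ * ν ^ (β + r - 1) + ν * μ ^ (β + r - 1))
      ≤ (r - 1) * (ν * μ ^ (r - 1) * ν ^ β + ν * μ ^ (r - 1) * μ ^ β) := by
        rw [e₁, ← e₂]; gcongr; linarith
    _ = (r - 1) * (ν * μ ^ (r - 1)) * (μ ^ β + ν ^ β) := by ring
    _ ≤ (r * ν * μ ^ (r - 1) - ν ^ r) * (μ ^ β + ν ^ β) := by gcongr; linarith

end Weights

theorem symmetrized_integrand_le {θ β r μ ν : ℝ} {Λ a b : ℝ≥0∞} (hθ : 0 ≤ θ) (hr : 2 ≤ r)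
    (hν : 0 < ν) (hνμ : ν ≤ μ) (hΛ : ENNReal.ofReal (θ * (μ ^ β + ν ^ β)) ≤ Λ) :
    ENNReal.ofReal ((r - 1) * θ) *
        (ENNReal.ofReal (μ * ν ^ (β + r - 1)) * a * b +
          ENNReal.ofReal (ν * μ ^ (β + r - 1)) * b * a)
      ≤ ENNReal.ofReal (r * ν * μ ^ (r - 1) - ν ^ r) * Λ * a * b := by
  have hμ : 0 < μ := hν.trans_le hνμ
  have hbracket : 0 ≤ r * ν * μ ^ (r - 1) - ν ^ r := by
    nlinarith [rpow_le_mul_rpow_sub_one hν hνμ (by linarith : (1 : ℝ) ≤ r),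
      mul_pos hν (Real.rpow_pos_of_pos hμ (r - 1))]
  have hreal : (r - 1) * θ * (μ * ν ^ (β + r - 1) + ν * μ ^ (β + r - 1))
      ≤ (r * ν * μ ^ (r - 1) - ν ^ r) * (θ * (μ ^ β + ν ^ β)) := by
    have := mul_le_mul_of_nonneg_left (sub_one_mul_symmetrized_weight_le β hν hνμ hr) hθ
    linarith
  calc ENNReal.ofReal ((r - 1) * θ) *
        (ENNReal.ofReal (μ * ν ^ (β + r - 1)) * a * b +
          ENNReal.ofReal (ν * μ ^ (β + r - 1)) * b * a)
      = ENNReal.ofReal ((r - 1) * θ * (μ * ν ^ (β + r - 1) + ν * μ ^ (β + r - 1))) * a * b := by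
        rw [ENNReal.ofReal_mul (p := (r - 1) * θ) (by nlinarith),
          ENNReal.ofReal_add (by positivity) (by positivity)]
        ring
    _ ≤ ENNReal.ofReal ((r * ν * μ ^ (r - 1) - ν ^ r) * (θ * (μ ^ β + ν ^ β))) * a * b := by
        gcongr ENNReal.ofReal ?_ * _ * _
    _ ≤ ENNReal.ofReal (r * ν * μ ^ (r - 1) - ν ^ r) * Λ * a * b := by
        rw [ENNReal.ofReal_mul hbracket]
        gcongr

theorem stmt8_general (θ₁ β r : ℝ) (h1 : 0 < θ₁) (hr : 2 ≤ r)
    (Λ : ℝ → ℝ → ℝ≥0∞)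
    (ξ : ℝ → ℝ≥0∞) (hξ : Measurable ξ)
    (hΛ : ∀ μ ν : ℝ, 0 < μ → 0 < ν → ENNReal.ofReal (θ₁ * (μ ^ β + ν ^ β)) ≤ Λ μ ν) :
    ENNReal.ofReal ((r - 1) * θ₁) *
        ∫⁻ μ in Ioi (0:ℝ), ∫⁻ ν in Ioi (0:ℝ),
          ENNReal.ofReal (μ * ν ^ (β + r - 1)) * ξ μ * ξ ν ≤
      ∫⁻ μ in Ioi (0:ℝ), ∫⁻ ν in Ioo 0 μ,
        ENNReal.ofReal (r * ν * μ ^ (r - 1) - ν ^ r) * Λ μ ν * ξ μ * ξ ν := by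
  have hG : Measurable (Function.uncurry fun μ ν : ℝ ↦
      ENNReal.ofReal (μ * ν ^ (β + r - 1)) * ξ μ * ξ ν) := by
    fun_prop
  rw [lintegral_lintegral_eq_lintegral_setLIntegral_Iio_add_swap hG]
  simp_rw [Measure.restrict_restrict measurableSet_Iio, Iio_inter_Ioi]
  rw [← lintegral_const_mul' _ _ ENNReal.ofReal_ne_top]
  refine setLIntegral_mono' measurableSet_Ioi fun μ hμ ↦ ?_
  rw [← lintegral_const_mul' _ _ ENNReal.ofReal_ne_top]
  refine setLIntegral_mono' measurableSet_Ioo fun ν hν ↦ ?_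
  exact symmetrized_integrand_le h1.le hr hν.1 hν.2.le (hΛ μ ν hμ hν.1)

theorem stmt8 (θ₁ β r : ℝ) (h1 : 0 < θ₁) (hβ : 1 < β) (hr : 2 ≤ r)
    (Λ : ℝ → ℝ → ℝ≥0∞) (hΛmeas : Measurable (Function.uncurry Λ))
    (ξ : ℝ → ℝ≥0∞) (hξ : Measurable ξ)
    (hΛ : ∀ μ ν : ℝ, 0 < μ → 0 < ν → ENNReal.ofReal (θ₁ * (μ ^ β + ν ^ β)) ≤ Λ μ ν) :
    ENNReal.ofReal ((r - 1) * θ₁) *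
        ∫⁻ μ in Ioi (0:ℝ), ∫⁻ ν in Ioi (0:ℝ),
          ENNReal.ofReal (μ * ν ^ (β + r - 1)) * ξ μ * ξ ν ≤
      ∫⁻ μ in Ioi (0:ℝ), ∫⁻ ν in Ioo 0 μ,
        ENNReal.ofReal (r * ν * μ ^ (r - 1) - ν ^ r) * Λ μ ν * ξ μ * ξ ν :=
  stmt8_general θ₁ β r h1 hr Λ ξ hξ hΛ
end

section
/- Let ξ : (0,∞) → [0,∞) be measurable with ∫₀^∞ ξ dμ and all stated integrals finite, and suppose for all s in a set of full measure in (0, t₀), ∫_{R₀}^∞ ∫₀^μ μ² ξ(μ,s) ξ(ν,s) dν dμ = 0 where R₀ ≥ 0. Then ∫₀^{t₀} (∫_{R₀}^∞ ν ξ(ν,s) dν)² ds = 0, and hence ∫_{R₀}^∞ ν ξ(ν,s) dν = 0 for a.e. s ∈ (0, t₀). -/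
open MeasureTheory Set
open scoped ENNReal

lemma key11 (R₀ : ℝ) (hR : 0 ≤ R₀) (g : ℝ → ℝ≥0∞) (hg : Measurable g)
    (h0 : ∫⁻ μ in Ioi R₀, ∫⁻ ν in Ioo 0 μ,
        ENNReal.ofReal (μ ^ 2) * g μ * g ν = 0) :
    ∀ᵐ ν ∂(volume.restrict (Ioi R₀)), g ν = 0 := by
  set J : ℝ → ℝ≥0∞ := fun μ => ∫⁻ ν in Ioo 0 μ, g ν with hJ
  have hJmono : Monotone J := fun a b hab =>
    lintegral_mono_set (Ioo_subset_Ioo le_rfl hab)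
  have hJmeas : Measurable J := hJmono.measurable
  have heq : ∀ μ : ℝ, (∫⁻ ν in Ioo 0 μ, ENNReal.ofReal (μ ^ 2) * g μ * g ν)
      = ENNReal.ofReal (μ ^ 2) * g μ * J μ := fun μ => lintegral_const_mul _ hg
  rw [lintegral_congr heq] at h0
  have hF : Measurable fun μ => ENNReal.ofReal (μ ^ 2) * g μ * J μ :=
    (((measurable_id.pow_const 2).ennreal_ofReal).mul hg).mul hJmeas
  have hae' : ∀ᵐ μ : ℝ, μ ∈ Ioi R₀ → ENNReal.ofReal (μ ^ 2) * g μ * J μ = 0 :=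
    (ae_restrict_iff' measurableSet_Ioi).mp ((lintegral_eq_zero_iff hF).mp h0)
  have hdisj : ∀ᵐ μ : ℝ, μ ∈ Ioi R₀ → (g μ = 0 ∨ J μ = 0) := by
    filter_upwards [hae'] with μ h hμ
    have hμ0 : (0:ℝ) < μ := lt_of_le_of_lt hR hμ
    have h2 : ENNReal.ofReal (μ ^ 2) ≠ 0 := by
      simpa [ENNReal.ofReal_eq_zero] using (pow_pos hμ0 2).not_ge
    rcases mul_eq_zero.mp (h hμ) with h' | h'
    · rcases mul_eq_zero.mp h' with h'' | h''
      · exact absurd h'' h2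
      · exact Or.inl h''
    · exact Or.inr h'
  -- null set of "bad" points where J vanishes but g doesn't
  have hq : ∀ q : ℚ, J (q : ℝ) = 0 → volume (Ioo (0:ℝ) (q:ℝ) ∩ {x | g x ≠ 0}) = 0 := by
    intro q hq0
    have h1 : ∀ᵐ x : ℝ, x ∈ Ioo (0:ℝ) (q:ℝ) → g x = 0 :=
      (ae_restrict_iff' measurableSet_Ioo).mp ((lintegral_eq_zero_iff hg).mp hq0)
    rw [ae_iff] at h1
    refine measure_mono_null ?_ h1
    intro x hx
    simp only [mem_setOf_eq] at *
    exact fun h => hx.2 (h hx.1)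
  set M : Set ℝ := {x | J x = 0 ∧ ∀ y, x < y → J y ≠ 0} with hM
  have hMnull : volume M = 0 := by
    have : M.Subsingleton := by
      intro a ha b hb
      by_contra hne
      rcases lt_or_gt_of_ne hne with h | h
      · exact ha.2 b h hb.1
      · exact hb.2 a h ha.1
    exact this.measure_zero _
  set Z : Set ℝ := {x | x ∈ Ioi R₀ ∧ g x ≠ 0 ∧ J x = 0} with hZd
  have hZnull : volume Z = 0 := by
    have hsub : Z ⊆ M ∪ ⋃ (q : ℚ), ⋃ (_ : J (q:ℝ) = 0), (Ioo (0:ℝ) (q:ℝ) ∩ {x | g x ≠ 0}) := by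
      intro x hx
      obtain ⟨hx1, hx2, hx3⟩ := hx
      by_cases h : ∀ y, x < y → J y ≠ 0
      · exact Or.inl ⟨hx3, h⟩
      · push_neg at h
        obtain ⟨y, hxy, hy0⟩ := h
        obtain ⟨q, hq1, hq2⟩ := exists_rat_btwn hxy
        have hJq : J (q:ℝ) = 0 := le_antisymm (hy0 ▸ hJmono hq2.le) zero_le
        refine Or.inr (mem_iUnion.mpr ⟨q, mem_iUnion.mpr ⟨hJq, ?_⟩⟩)
        exact ⟨⟨lt_of_le_of_lt hR hx1, hq1⟩, hx2⟩
    refine measure_mono_null hsub ?_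
    refine measure_union_null hMnull (measure_iUnion_null fun q => measure_iUnion_null fun h => hq q h)
  have hZae : ∀ᵐ x : ℝ, x ∉ Z := by
    rw [ae_iff]
    simpa using hZnull
  rw [ae_restrict_iff' measurableSet_Ioi]
  filter_upwards [hdisj, hZae] with x h1 h2 hx
  rcases h1 hx with h | h
  · exact h
  · by_contra hgx
    exact h2 ⟨hx, hgx, h⟩

theorem stmt11 (t₀ R₀ : ℝ) (ht : 0 < t₀) (hR : 0 ≤ R₀)
    (ξ : ℝ → ℝ → ℝ≥0∞) (hξ : Measurable (Function.uncurry ξ))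
    (hfin : ∀ s : ℝ, ∫⁻ μ in Ioi (0:ℝ), ξ μ s ≠ ∞)
    (hzero : ∀ᵐ s ∂(volume.restrict (Ioo (0:ℝ) t₀)),
      ∫⁻ μ in Ioi R₀, ∫⁻ ν in Ioo 0 μ,
        ENNReal.ofReal (μ ^ 2) * ξ μ s * ξ ν s = 0) :
    (∫⁻ s in Ioo (0:ℝ) t₀, (∫⁻ ν in Ioi R₀, ENNReal.ofReal ν * ξ ν s) ^ 2) = 0 ∧
      ∀ᵐ s ∂(volume.restrict (Ioo (0:ℝ) t₀)),
        ∫⁻ ν in Ioi R₀, ENNReal.ofReal ν * ξ ν s = 0 := by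
  have h2 : ∀ᵐ s ∂(volume.restrict (Ioo (0:ℝ) t₀)),
      ∫⁻ ν in Ioi R₀, ENNReal.ofReal ν * ξ ν s = 0 := by
    filter_upwards [hzero] with s hs
    have hgmeas : Measurable fun ν => ξ ν s :=
      hξ.comp (measurable_id.prodMk measurable_const)
    have hg0 := key11 R₀ hR _ hgmeas hs
    have hcong : (fun ν => ENNReal.ofReal ν * ξ ν s)
        =ᵐ[volume.restrict (Ioi R₀)] 0 := hg0.mono fun ν h => by simp [h]
    rw [lintegral_congr_ae hcong]; simp
  refine ⟨?_, h2⟩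
  have hcong : (fun s => (∫⁻ ν in Ioi R₀, ENNReal.ofReal ν * ξ ν s) ^ 2)
      =ᵐ[volume.restrict (Ioo (0:ℝ) t₀)] 0 := h2.mono fun s h => by simp [h]
  rw [lintegral_congr_ae hcong]; simp
end
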